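/- Let ρ : ℝⁿ → ℝ≥0 be a continuous positive definite function (ρ(0) = 0 and ρ(x) > 0 for x ≠ 0). Then there exist a class-K∞ function α and a class-L function σ such that ρ(x) ≥ α(‖x‖)·σ(‖x‖) for all x ∈ ℝⁿ. -/

import Mathlib

open scoped NNReal

/-- Class-K∞: continuous, zero at zero, strictly increasing, unbounded. -/
def ClassKInf (α : ℝ≥0 → ℝ≥0) : Prop :=
  Continuous α ∧ α 0 = 0 ∧ StrictMono α ∧ Filter.Tendsto α Filter.atTop Filter.atTop

/-- Class-L: continuous, strictly decreasing, tends to 0 at ∞. -/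
def ClassL (σ : ℝ≥0 → ℝ≥0) : Prop :=
  Continuous σ ∧ StrictAnti σ ∧ Filter.Tendsto σ Filter.atTop (nhds 0)

/-!
Let `δ s` be the infimum of `ρ` over the annulus `s ≤ ‖x‖ ≤ 1/s`. It is nondecreasing in `s`,
positive for `s > 0` by compactness, and `δ (min ‖x‖ ‖x‖⁻¹) ≤ ρ x`; so it suffices to find
`α ∈ K∞` and `σ ∈ L` with `α r * σ r ≤ δ (min r r⁻¹)`. The primitive
`α r = ∫₀ʳ δ (min t 1) dt` is class-K∞ with `α r ≤ r δ r` on `[0, 1]`, so `σ` only has to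
lie below the positive antitone function `w r = min 1 (δ r⁻¹ / α r)` (with `r` replaced by
`max r 1`), and `(∫ᵣ^{r+1} w) e^{-r}` is a class-L function below `w`.
-/

open Set Filter Topology MeasureTheory

lemma classKInf_toNNReal_comp {F : ℝ → ℝ} (hc : ContinuousOn F (Ici 0)) (h0 : F 0 = 0)
    (hmono : StrictMonoOn F (Ici 0)) (htop : Tendsto F atTop atTop) :
    ClassKInf fun r : ℝ≥0 => (F r).toNNReal := by
  refine ⟨continuous_real_toNNReal.comp (hc.comp_continuous NNReal.continuous_coe
    fun r => r.coe_nonneg), by simp [h0], fun r r' hrr' => ?_,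
    tendsto_real_toNNReal_atTop.comp (htop.comp (NNReal.tendsto_coe_atTop.2 tendsto_id))⟩
  have hr : F r < F r' := hmono r.coe_nonneg r'.coe_nonneg hrr'
  have hr' : 0 < F r' := h0 ▸ hmono self_mem_Ici r'.coe_nonneg (r.coe_nonneg.trans_lt hrr')
  exact (Real.toNNReal_lt_toNNReal_iff hr').2 hr

lemma classL_toNNReal_comp {F : ℝ → ℝ} (hc : ContinuousOn F (Ici 0))
    (hpos : ∀ r, 0 ≤ r → 0 < F r) (hanti : StrictAntiOn F (Ici 0))
    (hlim : Tendsto F atTop (𝓝 0)) : ClassL fun r : ℝ≥0 => (F r).toNNReal := by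
  refine ⟨continuous_real_toNNReal.comp (hc.comp_continuous NNReal.continuous_coe
    fun r => r.coe_nonneg), fun r r' hrr' => ?_, ?_⟩
  · exact (Real.toNNReal_lt_toNNReal_iff (hpos r r.coe_nonneg)).2
      (hanti r.coe_nonneg r'.coe_nonneg hrr')
  · have := (continuous_real_toNNReal.tendsto 0).comp
      (hlim.comp (NNReal.tendsto_coe_atTop.2 tendsto_id))
    rwa [Real.toNNReal_zero] at this

lemma zero_mem_lowerBounds_insert_one_image {α : Type*} {ρ : α → ℝ} (hρ : ∀ x, 0 ≤ ρ x)
    (S : Set α) : 0 ∈ lowerBounds (insert 1 (ρ '' S)) := by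
  rintro _ (rfl | ⟨x, -, rfl⟩)
  exacts [zero_le_one, hρ x]

section Annulus

variable {E : Type*} [NormedAddCommGroup E]

/-- Written with `s * ‖x‖₊ ≤ 1` rather than `‖x‖₊ ≤ s⁻¹`, which would break antitonicity at
`s = 0` (where `s⁻¹ = 0`). -/
def annulus (s : ℝ≥0) : Set E := {x | s ≤ ‖x‖₊ ∧ s * ‖x‖₊ ≤ 1}

lemma annulus_antitone : Antitone (annulus (E := E)) := fun _ _ hss' _ hx =>
  ⟨hss'.trans hx.1, (mul_le_mul_left hss' _).trans hx.2⟩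

lemma isCompact_annulus [ProperSpace E] {s : ℝ≥0} (hs : 0 < s) :
    IsCompact (annulus s : Set E) := by
  have hclosed : IsClosed (annulus s : Set E) :=
    (isClosed_le continuous_const continuous_nnnorm).inter
      (isClosed_le (by fun_prop) continuous_const)
  refine (isCompact_closedBall 0 (s⁻¹ : ℝ≥0)).of_isClosed_subset hclosed fun x hx => ?_
  rw [mem_closedBall_zero_iff, ← coe_nnnorm, NNReal.coe_le_coe,
    NNReal.le_inv_iff_mul_le hs.ne', mul_comm]
  exact hx.2

lemma mem_annulus_min_inv (x : E) : x ∈ annulus (min ‖x‖₊ ‖x‖₊⁻¹) :=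
  ⟨min_le_left _ _,
    (mul_le_mul_of_nonneg_right (min_le_right _ _) zero_le).trans inv_mul_le_one⟩

/-- The value `1` is inserted so that an empty annulus gives `1` rather than `sInf ∅ = 0`. -/
noncomputable def annulusInf (ρ : E → ℝ) (s : ℝ≥0) : ℝ := sInf (insert 1 (ρ '' annulus s))

variable {ρ : E → ℝ}

lemma annulusInf_le (hρ : ∀ x, 0 ≤ ρ x) {s : ℝ≥0} {x : E} (hx : x ∈ annulus s) :
    annulusInf ρ s ≤ ρ x :=
  csInf_le ⟨0, zero_mem_lowerBounds_insert_one_image hρ _⟩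
    (mem_insert_of_mem _ (mem_image_of_mem ρ hx))

lemma annulusInf_nonneg (hρ : ∀ x, 0 ≤ ρ x) (s : ℝ≥0) : 0 ≤ annulusInf ρ s :=
  le_csInf (insert_nonempty _ _) (zero_mem_lowerBounds_insert_one_image hρ _)

lemma annulusInf_mono (hρ : ∀ x, 0 ≤ ρ x) : Monotone (annulusInf ρ) := fun _ _ hss' =>
  csInf_le_csInf ⟨0, zero_mem_lowerBounds_insert_one_image hρ _⟩ (insert_nonempty _ _)
    (insert_subset_insert (image_mono (annulus_antitone hss')))

lemma annulusInf_pos [ProperSpace E] (hc : Continuous ρ) (hpos : ∀ x, x ≠ 0 → 0 < ρ x)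
    {s : ℝ≥0} (hs : 0 < s) : 0 < annulusInf ρ s := by
  obtain h | ⟨x, hx, hρx⟩ :=
    (((isCompact_annulus hs).image hc).insert 1).sInf_mem (insert_nonempty _ _)
  · rw [annulusInf, h]; exact one_pos
  · rw [annulusInf, ← hρx]
    refine hpos x fun h => ?_
    simpa [h, hs.ne'] using hx.1

end Annulus

open intervalIntegral

lemma Monotone.intervalIntegral_le_sub_mul {f : ℝ → ℝ} (hf : Monotone f) {a b : ℝ}
    (hab : a ≤ b) : ∫ t in a..b, f t ≤ (b - a) * f b := by
  simpa using integral_mono_on (μ := volume) hab hf.intervalIntegrable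
    intervalIntegrable_const fun t ht => hf ht.2

lemma Monotone.sub_mul_le_intervalIntegral {f : ℝ → ℝ} (hf : Monotone f) {a b : ℝ}
    (hab : a ≤ b) : (b - a) * f a ≤ ∫ t in a..b, f t := by
  simpa using integral_mono_on (μ := volume) hab intervalIntegrable_const hf.intervalIntegrable
    fun t ht => hf ht.1

theorem exists_classKInf_le_mul {m : ℝ≥0 → ℝ} (hm : Monotone m)
    (hpos : ∀ s, 0 < s → 0 < m s) :
    ∃ α, ClassKInf α ∧ ∀ r ≤ 1, (α r : ℝ) ≤ r * m r := by
  set u : ℝ → ℝ := fun t => m (min t.toNNReal 1)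
  have hu : Monotone u := fun t t' h => hm (min_le_min_right 1 (Real.toNNReal_le_toNNReal h))
  have hu_pos : ∀ t, 0 < t → 0 < u t := fun t ht =>
    hpos _ (lt_min (Real.toNNReal_pos.2 ht) one_pos)
  set F : ℝ → ℝ := fun r => ∫ t in 0..r, u t
  have hF_sub : ∀ a b, F b - F a = ∫ t in a..b, u t := fun a b =>
    integral_interval_sub_left hu.intervalIntegrable hu.intervalIntegrable
  have hF_zero : F 0 = 0 := integral_same
  have hF_mono : StrictMonoOn F (Ici 0) := fun a ha b _ hab => sub_pos.1 <|
    (hF_sub a b).symm ▸ intervalIntegral_pos_of_pos_on hu.intervalIntegrable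
      (fun t ht => hu_pos t (lt_of_le_of_lt ha ht.1)) hab
  have hF_top : Tendsto F atTop atTop := by
    have hlin : Tendsto (fun r => F 1 + (r + -1) * u 1) atTop atTop :=
      tendsto_atTop_add_const_left _ _
        ((tendsto_atTop_add_const_right _ _ tendsto_id).atTop_mul_const (hu_pos 1 one_pos))
    refine tendsto_atTop_mono' _ ((eventually_ge_atTop 1).mono fun r hr => ?_) hlin
    linarith [hF_sub 1 r, hu.sub_mul_le_intervalIntegral hr]
  have hF_cont : Continuous F := continuous_primitive (fun _ _ => hu.intervalIntegrable) 0
  refine ⟨fun r => (F r).toNNReal,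
    classKInf_toNNReal_comp hF_cont.continuousOn hF_zero hF_mono hF_top, fun r hr => ?_⟩
  have hF_nonneg : 0 ≤ F r :=
    hF_zero ▸ hF_mono.monotoneOn self_mem_Ici r.coe_nonneg r.coe_nonneg
  rw [Real.coe_toNNReal _ hF_nonneg]
  simpa [u, hr] using hu.intervalIntegral_le_sub_mul r.coe_nonneg

theorem exists_classL_le {w : ℝ≥0 → ℝ} (hw : Antitone w) (hpos : ∀ r, 0 < w r) :
    ∃ σ, ClassL σ ∧ ∀ r, (σ r : ℝ) ≤ w r := by
  set v : ℝ → ℝ := fun t => w t.toNNReal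
  have hv : Antitone v := fun t t' h => hw (Real.toNNReal_le_toNNReal h)
  have hv_shift : ∀ r, Antitone fun t => v (r + t) := fun r =>
    hv.comp_monotone fun _ _ h => add_le_add_right h r
  set I : ℝ → ℝ := fun r => ∫ t in r..r + 1, v t
  have hI_eq : ∀ r, I r = ∫ t in 0..1, v (r + t) := fun r => by
    simp [I, integral_comp_add_left]
  have hI_pos : ∀ r, 0 < I r := fun r =>
    intervalIntegral_pos_of_pos_on hv.intervalIntegrable (fun t _ => hpos _) (lt_add_one r)
  have hI_anti : Antitone I := fun r r' h => by
    rw [hI_eq, hI_eq]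
    exact integral_mono_on zero_le_one (hv_shift r').intervalIntegrable
      (hv_shift r).intervalIntegrable fun t _ => hv (add_le_add_left h t)
  have hI_le : ∀ r, I r ≤ v r := fun r => by
    rw [hI_eq]
    refine (integral_mono_on zero_le_one (hv_shift r).intervalIntegrable
      intervalIntegrable_const fun t ht => hv (le_add_of_nonneg_right ht.1)).trans_eq ?_
    simp
  have hI_cont : Continuous I := by
    have hprim := continuous_primitive (μ := volume) (fun _ _ => hv.intervalIntegrable) 0
    have : I = fun r => (∫ t in 0..r + 1, v t) - ∫ t in 0..r, v t := funext fun r =>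
      (integral_interval_sub_left hv.intervalIntegrable hv.intervalIntegrable).symm
    rw [this]
    exact (hprim.comp (continuous_add_const 1)).sub hprim
  set F : ℝ → ℝ := fun r => I r * Real.exp (-r)
  have hF_pos : ∀ r, 0 < F r := fun r => mul_pos (hI_pos r) (Real.exp_pos _)
  refine ⟨fun r => (F r).toNNReal, classL_toNNReal_comp ?_ (fun r _ => hF_pos r) ?_ ?_,
    fun r => ?_⟩
  · exact (hI_cont.mul (Real.continuous_exp.comp continuous_neg)).continuousOn
  · intro r _ r' _ h
    calc F r' ≤ I r * Real.exp (-r') :=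
          mul_le_mul_of_nonneg_right (hI_anti h.le) (Real.exp_pos _).le
      _ < F r := mul_lt_mul_of_pos_left (Real.exp_lt_exp.2 (neg_lt_neg h)) (hI_pos r)
  · refine tendsto_of_tendsto_of_tendsto_of_le_of_le' tendsto_const_nhds
      (by simpa using Real.tendsto_exp_neg_atTop_nhds_zero.const_mul (v 0))
      (Eventually.of_forall fun r => (hF_pos r).le)
      ((eventually_ge_atTop 0).mono fun r hr => ?_)
    exact mul_le_mul_of_nonneg_right ((hI_le r).trans (hv hr)) (Real.exp_pos _).le
  · rw [Real.coe_toNNReal _ (hF_pos r).le]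
    calc F r ≤ I r := mul_le_of_le_one_right (hI_pos r).le
          (Real.exp_le_one_iff.2 (neg_nonpos.2 r.coe_nonneg))
      _ ≤ w r := by simpa [v] using hI_le r

theorem exists_classKInf_classL_mul_le {m : ℝ≥0 → ℝ} (hm : Monotone m) (h0 : 0 ≤ m 0)
    (hpos : ∀ s, 0 < s → 0 < m s) :
    ∃ α σ : ℝ≥0 → ℝ≥0, ClassKInf α ∧ ClassL σ ∧
      ∀ r, ((α r * σ r : ℝ≥0) : ℝ) ≤ m (min r r⁻¹) := by
  obtain ⟨α, hα, hαm⟩ := exists_classKInf_le_mul hm hpos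
  have hα_pos : ∀ r, 1 ≤ r → 0 < (α r : ℝ) := fun r hr =>
    NNReal.coe_pos.2 (hα.2.1 ▸ hα.2.2.1 (one_pos.trans_le hr))
  have h1 : ∀ r : ℝ≥0, 1 ≤ max r 1 := fun r => le_max_right r 1
  have h1_pos : ∀ r : ℝ≥0, 0 < max r 1 := fun r => one_pos.trans_le (h1 r)
  set w : ℝ≥0 → ℝ := fun r => min 1 (m (max r 1)⁻¹ / α (max r 1))
  have hw_anti : Antitone w := fun r r' h => by
    have hmax := max_le_max_right 1 h
    exact min_le_min_left 1 <| div_le_div₀ (hpos _ (inv_pos.2 (h1_pos r))).le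
      (hm (inv_anti₀ (h1_pos r) hmax)) (hα_pos _ (h1 r))
      (NNReal.coe_le_coe.2 (hα.2.2.1.monotone hmax))
  have hw_pos : ∀ r, 0 < w r := fun r =>
    lt_min one_pos (div_pos (hpos _ (inv_pos.2 (h1_pos r))) (hα_pos _ (h1 r)))
  obtain ⟨σ, hσ, hσw⟩ := exists_classL_le hw_anti hw_pos
  refine ⟨α, σ, hα, hσ, fun r => ?_⟩
  have hσα : (α r * σ r : ℝ) ≤ α r * w r :=
    mul_le_mul_of_nonneg_left (hσw r) (α r).coe_nonneg
  rw [NNReal.coe_mul]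
  rcases le_total r 1 with hr | hr
  · have hmin : min r r⁻¹ = r := by
      rcases eq_or_ne r 0 with rfl | hr0
      · simp
      · exact min_eq_left (hr.trans ((one_le_inv₀ (pos_iff_ne_zero.2 hr0)).2 hr))
    rw [hmin]
    calc _ ≤ (α r : ℝ) * w r := hσα
      _ ≤ α r := mul_le_of_le_one_right (α r).coe_nonneg (min_le_left _ _)
      _ ≤ r * m r := hαm r hr
      _ ≤ m r := mul_le_of_le_one_left (h0.trans (hm zero_le)) hr
  · have hw_le : w r ≤ m r⁻¹ / α r := by
      simpa only [w, max_eq_left hr] using min_le_right _ _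
    rw [min_eq_right ((inv_le_one_of_one_le₀ hr).trans hr)]
    calc _ ≤ (α r : ℝ) * w r := hσα
      _ ≤ α r * (m r⁻¹ / α r) := mul_le_mul_of_nonneg_left hw_le (α r).coe_nonneg
      _ = m r⁻¹ := mul_div_cancel₀ _ (hα_pos r hr).ne'

theorem posdef_lower_bound_general (n : ℕ) (ρ : EuclideanSpace ℝ (Fin n) → ℝ)
    (hcont : Continuous ρ) (hnonneg : ∀ x, 0 ≤ ρ x)
    (hpos : ∀ x, x ≠ 0 → 0 < ρ x) :
    ∃ α σ : ℝ≥0 → ℝ≥0, ClassKInf α ∧ ClassL σ ∧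
      ∀ x : EuclideanSpace ℝ (Fin n), ((α ‖x‖₊ * σ ‖x‖₊ : ℝ≥0) : ℝ) ≤ ρ x := by
  obtain ⟨α, σ, hα, hσ, hbound⟩ := exists_classKInf_classL_mul_le (annulusInf_mono hnonneg)
    (annulusInf_nonneg hnonneg 0) fun _ hs => annulusInf_pos hcont hpos hs
  exact ⟨α, σ, hα, hσ, fun x =>
    (hbound ‖x‖₊).trans (annulusInf_le hnonneg (mem_annulus_min_inv x))⟩

/-- A continuous positive definite function `ρ : ℝⁿ → ℝ≥0` admits a lower bound of
the form `α(‖x‖) σ(‖x‖)` with `α` class-K∞ and `σ` class-L. -/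
theorem posdef_lower_bound (n : ℕ) (ρ : EuclideanSpace ℝ (Fin n) → ℝ)
    (hcont : Continuous ρ) (hnonneg : ∀ x, 0 ≤ ρ x) (h0 : ρ 0 = 0)
    (hpos : ∀ x, x ≠ 0 → 0 < ρ x) :
    ∃ α σ : ℝ≥0 → ℝ≥0, ClassKInf α ∧ ClassL σ ∧
      ∀ x : EuclideanSpace ℝ (Fin n), ((α ‖x‖₊ * σ ‖x‖₊ : ℝ≥0) : ℝ) ≤ ρ x :=
  posdef_lower_bound_general n ρ hcont hnonneg hpos
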